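/- arXiv:1411.2793 — 5 statements merged into one kernel-verified Lean document; each statement's English description precedes it below -/
import Mathlib

section
/- Let v ∈ ℝⁿ, let ν₁, …, νₙ ∈ ℝⁿ be a basis of ℝⁿ, let λ₁, …, λₙ ∈ ℝ, and define the affine functions ℓ_k(x) := ⟨ν_k, x⟩ + λ_k, and assume ℓ_k(v) = 0 for all k = 1, …, n. Let V₀ ⊆ ℝⁿ be a neighborhood of v, let B : V₀ → Sym(n, ℝ) be a map into real symmetric n×n matrices, and let M > 0 be such that the operator norm ‖B(x)‖ ≤ M for all x ∈ V₀. Then there exists a neighborhood V ⊆ V₀ of v such that for every x ∈ V with ℓ_k(x) > 0 for all k = 1, …, n, the symmetric matrix (1/2)·Σ_{k=1}^{n} ℓ_k(x)^{-1} ν_k ν_kᵀ + B(x) is positive definite. -/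
/-- The quadratic form `wᵀ M w` of a matrix. -/
def QuadForm {n : ℕ} (M : Matrix (Fin n) (Fin n) ℝ) (w : Fin n → ℝ) : ℝ :=
  ∑ i, ∑ j, w i * M i j * w j

/-- A real matrix is positive definite if `wᵀ M w > 0` for all nonzero `w`. -/
def PosDefMat {n : ℕ} (M : Matrix (Fin n) (Fin n) ℝ) : Prop :=
  ∀ w : Fin n → ℝ, w ≠ 0 → 0 < QuadForm M w

lemma coercive {n : ℕ} (ν : Fin n → (Fin n → ℝ)) (hν : LinearIndependent ℝ ν) :
    ∃ c : ℝ, 0 < c ∧ ∀ w : Fin n → ℝ, c * (∑ i, w i ^ 2) ≤ ∑ k, (∑ i, ν k i * w i) ^ 2 := by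
  classical
  set A : Matrix (Fin n) (Fin n) ℝ := Matrix.of ν with hA
  have hAunit : IsUnit A := Matrix.linearIndependent_rows_iff_isUnit.mp hν
  have hinj : Function.Injective A.mulVec := Matrix.mulVec_injective_iff_isUnit.mpr hAunit
  let T : EuclideanSpace ℝ (Fin n) →ₗ[ℝ] EuclideanSpace ℝ (Fin n) :=
    (WithLp.linearEquiv 2 ℝ (Fin n → ℝ)).symm.toLinearMap ∘ₗ A.mulVecLin ∘ₗ
      (WithLp.linearEquiv 2 ℝ (Fin n → ℝ)).toLinearMap
  have hTinj : Function.Injective T :=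
    (WithLp.linearEquiv 2 ℝ (Fin n → ℝ)).symm.injective.comp
      (hinj.comp (WithLp.linearEquiv 2 ℝ (Fin n → ℝ)).injective)
  have hTbij : Function.Bijective T :=
    ⟨hTinj, (LinearMap.injective_iff_surjective).mp hTinj⟩
  let e : EuclideanSpace ℝ (Fin n) ≃L[ℝ] EuclideanSpace ℝ (Fin n) :=
    (LinearEquiv.ofBijective T hTbij).toContinuousLinearEquiv
  have hal := e.antilipschitz
  set K : ℝ := max ‖(e.symm : EuclideanSpace ℝ (Fin n) →L[ℝ] EuclideanSpace ℝ (Fin n))‖ 1 with hK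
  have hK1 : (1:ℝ) ≤ K := le_max_right _ _
  have hKpos : 0 < K := lt_of_lt_of_le one_pos hK1
  refine ⟨(K^2)⁻¹, by positivity, fun w => ?_⟩
  let w' : EuclideanSpace ℝ (Fin n) := WithLp.toLp 2 w
  have hw : ‖w'‖ ≤ K * ‖T w'‖ := by
    have h0 := hal.le_mul_dist w' 0
    rw [dist_zero_right, map_zero e, dist_zero_right] at h0
    calc ‖w'‖ ≤ ‖(e.symm : EuclideanSpace ℝ (Fin n) →L[ℝ] EuclideanSpace ℝ (Fin n))‖ * ‖e w'‖ := by
          exact_mod_cast h0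
      _ ≤ K * ‖T w'‖ := by
          apply mul_le_mul (le_max_left _ _) le_rfl (norm_nonneg _) (le_of_lt hKpos)
  have hsq : ‖w'‖^2 ≤ K^2 * ‖T w'‖^2 := by
    rw [← mul_pow]
    exact pow_le_pow_left₀ (norm_nonneg _) hw 2
  have h1 : ‖w'‖^2 = ∑ i, w i ^ 2 := by
    rw [EuclideanSpace.norm_eq, Real.sq_sqrt (by positivity)]
    simp [w', Real.norm_eq_abs, sq_abs]
  have h2 : ‖(T w' : EuclideanSpace ℝ (Fin n))‖^2 = ∑ k, (∑ i, ν k i * w i) ^ 2 := by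
    rw [EuclideanSpace.norm_eq, Real.sq_sqrt (by positivity)]
    simp only [w', Real.norm_eq_abs, sq_abs]
    refine Finset.sum_congr rfl fun k _ => ?_
    show ((Matrix.of ν).mulVec w k) ^ 2 = _
    simp [Matrix.mulVec, dotProduct]
  rw [h1, h2] at hsq
  rw [inv_mul_le_iff₀ (by positivity)]
  nlinarith [hsq]

lemma QuadForm_add {n : ℕ} (A B : Matrix (Fin n) (Fin n) ℝ) (w : Fin n → ℝ) :
    QuadForm (A + B) w = QuadForm A w + QuadForm B w := by
  simp [QuadForm, Matrix.add_apply, mul_add, add_mul, Finset.sum_add_distrib]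

lemma QuadForm_smul {n : ℕ} (c : ℝ) (A : Matrix (Fin n) (Fin n) ℝ) (w : Fin n → ℝ) :
    QuadForm (c • A) w = c * QuadForm A w := by
  simp only [QuadForm, Matrix.smul_apply, smul_eq_mul, Finset.mul_sum]
  exact Finset.sum_congr rfl fun i _ => Finset.sum_congr rfl fun j _ => by ring

lemma QuadForm_sum {n m : ℕ} (A : Fin m → Matrix (Fin n) (Fin n) ℝ) (w : Fin n → ℝ) :
    QuadForm (∑ k, A k) w = ∑ k, QuadForm (A k) w := by
  simp only [QuadForm, Matrix.sum_apply, Finset.mul_sum, Finset.sum_mul]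
  calc ∑ i, ∑ j, ∑ k, w i * A k i j * w j
      = ∑ i, ∑ k, ∑ j, w i * A k i j * w j :=
        Finset.sum_congr rfl fun i _ => Finset.sum_comm
    _ = ∑ k, ∑ i, ∑ j, w i * A k i j * w j := Finset.sum_comm

lemma QuadForm_vecMulVec {n : ℕ} (u w : Fin n → ℝ) :
    QuadForm (Matrix.vecMulVec u u) w = (∑ i, u i * w i) ^ 2 := by
  rw [sq, Finset.sum_mul_sum]
  simp only [QuadForm, Matrix.vecMulVec_apply]
  exact Finset.sum_congr rfl fun i _ => Finset.sum_congr rfl fun j _ => by ring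

theorem stmt_2 (n : ℕ) (v : Fin n → ℝ) (ν : Fin n → (Fin n → ℝ))
    (hν : LinearIndependent ℝ ν) (lam : Fin n → ℝ)
    (ℓ : Fin n → (Fin n → ℝ) → ℝ)
    (hℓ : ∀ k x, ℓ k x = (∑ i, ν k i * x i) + lam k)
    (hv : ∀ k, ℓ k v = 0)
    (V₀ : Set (Fin n → ℝ)) (hV₀ : V₀ ∈ nhds v)
    (B : (Fin n → ℝ) → Matrix (Fin n) (Fin n) ℝ)
    (hBsymm : ∀ x ∈ V₀, (B x).IsSymm)
    (M : ℝ) (hM : 0 < M)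
    -- `‖B x‖ ≤ M` in operator norm: for symmetric matrices this is exactly the
    -- bound `|wᵀ B(x) w| ≤ M ‖w‖²` on the quadratic form.
    (hB : ∀ x ∈ V₀, ∀ w : Fin n → ℝ, |QuadForm (B x) w| ≤ M * ∑ i, w i ^ 2) :
    ∃ V ∈ nhds v, V ⊆ V₀ ∧ ∀ x ∈ V, (∀ k, 0 < ℓ k x) →
      PosDefMat ((1 / 2 : ℝ) •
        (∑ k, (ℓ k x)⁻¹ • Matrix.vecMulVec (ν k) (ν k)) + B x) := by
  classical
  obtain ⟨c, hc, hcoer⟩ := coercive ν hν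
  set ε : ℝ := c / (4 * M) with hε
  have hεpos : 0 < ε := by positivity
  have hcont : ∀ k, Continuous (ℓ k) := by
    intro k
    have : ℓ k = fun x => (∑ i, ν k i * x i) + lam k := funext (hℓ k)
    rw [this]
    exact (continuous_finset_sum _ fun i _ =>
      (continuous_const.mul (continuous_apply i))).add continuous_const
  set V : Set (Fin n → ℝ) := V₀ ∩ ⋂ k, {x | ℓ k x < ε} with hVdef
  have hVnhds : V ∈ nhds v := by
    refine Filter.inter_mem hV₀ (Filter.iInter_mem.mpr fun k => ?_)
    exact (isOpen_lt (hcont k) continuous_const).mem_nhds (by simp [hv k, hεpos])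
  refine ⟨V, hVnhds, Set.inter_subset_left, fun x hx hpos w hw0 => ?_⟩
  have hxV₀ : x ∈ V₀ := hx.1
  have hxlt : ∀ k, ℓ k x < ε := fun k => Set.mem_iInter.mp hx.2 k
  -- positivity of ∑ w i ^ 2
  have hwsum : 0 < ∑ i, w i ^ 2 := by
    obtain ⟨i, hi⟩ := Function.ne_iff.mp hw0
    exact Finset.sum_pos' (fun j _ => sq_nonneg _) ⟨i, Finset.mem_univ i, sq_pos_of_ne_zero hi⟩
  -- compute the quadratic form
  rw [QuadForm_add, QuadForm_smul, QuadForm_sum]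
  have hterm : ∀ k, QuadForm ((ℓ k x)⁻¹ • Matrix.vecMulVec (ν k) (ν k)) w
      = (ℓ k x)⁻¹ * (∑ i, ν k i * w i) ^ 2 := fun k => by
    rw [QuadForm_smul, QuadForm_vecMulVec]
  -- lower bound for the sum of the potential terms
  have hlow : ε⁻¹ * ∑ k, (∑ i, ν k i * w i) ^ 2
      ≤ ∑ k, QuadForm ((ℓ k x)⁻¹ • Matrix.vecMulVec (ν k) (ν k)) w := by
    rw [Finset.mul_sum]
    refine Finset.sum_le_sum fun k _ => ?_
    rw [hterm k]
    refine mul_le_mul_of_nonneg_right ?_ (sq_nonneg _)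
    exact (inv_le_inv₀ hεpos (hpos k)).mpr (hxlt k).le
  have hcoerw := hcoer w
  have hBw := hB x hxV₀ w
  have habs : -(M * ∑ i, w i ^ 2) ≤ QuadForm (B x) w := neg_le_of_abs_le hBw
  have hεinv : ε⁻¹ = 4 * M / c := by
    rw [hε, inv_div]
  have hchain : 2 * M * ∑ i, w i ^ 2 ≤ (1/2 : ℝ) * ∑ k,
      QuadForm ((ℓ k x)⁻¹ • Matrix.vecMulVec (ν k) (ν k)) w := by
    have h1 : ε⁻¹ * (c * ∑ i, w i ^ 2) ≤ ε⁻¹ * ∑ k, (∑ i, ν k i * w i) ^ 2 :=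
      mul_le_mul_of_nonneg_left hcoerw (by positivity)
    have h2 : ε⁻¹ * (c * ∑ i, w i ^ 2) = 4 * M * ∑ i, w i ^ 2 := by
      rw [hεinv]
      field_simp
    nlinarith [hlow]
  nlinarith [hchain, habs, hwsum]
end

section
/- Let A ⊆ ℝⁿ be a bounded open set, let K ⊆ A be a nonempty compact set, let φ : A → ℝ be continuous and bounded, and let w : A → ℝ be continuous with w(x) > 0 for all x ∈ A and w Lebesgue-integrable on A. Assume sup_{x∈K} φ(x) < sup_{x∈A} φ(x). Then there exist constants C > 0 and α > 0 such that for all s ≥ 0, ∫_K e^{sφ(x)} w(x) dx ≤ C e^{−sα} ∫_A e^{sφ(x)} w(x) dx. -/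
open MeasureTheory

theorem stmt_8 (n : ℕ) (A : Set (Fin n → ℝ)) (hAopen : IsOpen A)
    (hAbdd : Bornology.IsBounded A)
    (K : Set (Fin n → ℝ)) (hK : IsCompact K) (hKne : K.Nonempty) (hKA : K ⊆ A)
    (φ w : (Fin n → ℝ) → ℝ)
    (hφc : ContinuousOn φ A) (Mφ : ℝ) (hφb : ∀ x ∈ A, |φ x| ≤ Mφ)
    (hwc : ContinuousOn w A) (hwpos : ∀ x ∈ A, 0 < w x)
    (hwint : IntegrableOn w A)
    (hsup : sSup (φ '' K) < sSup (φ '' A)) :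
    ∃ C > 0, ∃ α > 0, ∀ s : ℝ, 0 ≤ s →
      ∫ x in K, Real.exp (s * φ x) * w x ≤
        C * Real.exp (-s * α) * ∫ x in A, Real.exp (s * φ x) * w x := by
  have hAm : MeasurableSet A := hAopen.measurableSet
  set MK := sSup (φ '' K) with hMKdef
  set MA := sSup (φ '' A) with hMAdef
  have hKim : IsCompact (φ '' K) := hK.image_of_continuousOn (hφc.mono hKA)
  have hφK : ∀ x ∈ K, φ x ≤ MK := fun x hx => le_csSup hKim.bddAbove ⟨x, hx, rfl⟩
  set β := (MK + MA) / 2 with hβdef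
  have hMKβ : MK < β := by rw [hβdef]; linarith
  have hβMA : β < MA := by rw [hβdef]; linarith
  have hAne : A.Nonempty := hKne.mono hKA
  obtain ⟨y, ⟨x0, hx0A, rfl⟩, hβx0⟩ := exists_lt_of_lt_csSup (hAne.image φ) hβMA
  -- open neighborhood where φ > β and w > w x0 / 2
  have hU1 : IsOpen (A ∩ φ ⁻¹' Set.Ioi β) := hφc.isOpen_inter_preimage hAopen isOpen_Ioi
  have hU2 : IsOpen (A ∩ w ⁻¹' Set.Ioi (w x0 / 2)) := hwc.isOpen_inter_preimage hAopen isOpen_Ioi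
  have hUo : IsOpen ((A ∩ φ ⁻¹' Set.Ioi β) ∩ (A ∩ w ⁻¹' Set.Ioi (w x0 / 2))) := hU1.inter hU2
  have hwx0 : 0 < w x0 := hwpos x0 hx0A
  have hx0U : x0 ∈ (A ∩ φ ⁻¹' Set.Ioi β) ∩ (A ∩ w ⁻¹' Set.Ioi (w x0 / 2)) :=
    ⟨⟨hx0A, hβx0⟩, hx0A, by simpa using half_lt_self hwx0⟩
  obtain ⟨r, hr, hball⟩ := Metric.isOpen_iff.1 hUo x0 hx0U
  have hballA : Metric.ball x0 r ⊆ A := fun x hx => (hball hx).1.1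
  have hballφ : ∀ x ∈ Metric.ball x0 r, β < φ x := fun x hx => (hball hx).1.2
  have hballw : ∀ x ∈ Metric.ball x0 r, w x0 / 2 ≤ w x := fun x hx => (hball hx).2.2.le
  set c : ℝ := ∫ x in Metric.ball x0 r, w x with hcdef
  have hμball : 0 < (volume (Metric.ball x0 r)).toReal :=
    ENNReal.toReal_pos (Metric.measure_ball_pos volume x0 hr).ne' measure_ball_lt_top.ne
  have hc : 0 < c := by
    have := setIntegral_ge_of_const_le_real (c := w x0 / 2) measurableSet_ball
      measure_ball_lt_top.ne hballw (hwint.mono_set hballA)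
    have h0 : 0 < w x0 / 2 * (volume (Metric.ball x0 r)).toReal :=
      mul_pos (half_pos hwx0) hμball
    rw [measureReal_def] at this
    linarith
  set W : ℝ := ∫ x in K, w x with hWdef
  have hW0 : 0 ≤ W := setIntegral_nonneg hK.measurableSet fun x hx => (hwpos x (hKA hx)).le
  refine ⟨(W + 1) / c, by positivity, β - MK, by linarith, fun s hs => ?_⟩
  set f : (Fin n → ℝ) → ℝ := fun x => Real.exp (s * φ x) * w x with hfdef
  have hem : AEStronglyMeasurable (fun x => Real.exp (s * φ x)) (volume.restrict A) :=
    ((Real.continuous_exp.comp_continuousOn (continuousOn_const.mul hφc)).aestronglyMeasurable hAm)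
  have hfi : IntegrableOn f A := by
    refine Integrable.bdd_mul (c := Real.exp (s * Mφ)) hwint hem ?_
    refine (ae_restrict_iff' hAm).2 (Filter.Eventually.of_forall fun x hx => ?_)
    rw [Real.norm_eq_abs, Real.abs_exp, Real.exp_le_exp]
    exact mul_le_mul_of_nonneg_left ((le_abs_self _).trans (hφb x hx)) hs
  have hfnonneg : ∀ x ∈ A, 0 ≤ f x := fun x hx =>
    mul_nonneg (Real.exp_nonneg _) (hwpos x hx).le
  -- upper bound on K
  have h1 : ∫ x in K, f x ≤ Real.exp (s * MK) * W := by
    have := setIntegral_mono_on (hfi.mono_set hKA) ((hwint.mono_set hKA).const_mul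
      (Real.exp (s * MK))) hK.measurableSet (fun x hx => by
        refine mul_le_mul_of_nonneg_right ?_ (hwpos x (hKA hx)).le
        exact Real.exp_le_exp.2 (mul_le_mul_of_nonneg_left (hφK x hx) hs))
    calc ∫ x in K, f x ≤ ∫ x in K, Real.exp (s * MK) * w x := this
      _ = Real.exp (s * MK) * W := by rw [integral_const_mul]
  -- lower bound on A
  have h2 : Real.exp (s * β) * c ≤ ∫ x in A, f x := by
    have hb1 : Real.exp (s * β) * c ≤ ∫ x in Metric.ball x0 r, f x := by
      have := setIntegral_mono_on (((hwint.mono_set hballA)).const_mul (Real.exp (s * β)))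
        (hfi.mono_set hballA) measurableSet_ball (fun x hx => by
          refine mul_le_mul_of_nonneg_right ?_ (hwpos x (hballA hx)).le
          exact Real.exp_le_exp.2 (mul_le_mul_of_nonneg_left (hballφ x hx).le hs))
      calc Real.exp (s * β) * c = ∫ x in Metric.ball x0 r, Real.exp (s * β) * w x := by
            rw [integral_const_mul]
        _ ≤ _ := this
    have hb2 : ∫ x in Metric.ball x0 r, f x ≤ ∫ x in A, f x := by
      refine setIntegral_mono_set hfi ?_ (HasSubset.Subset.eventuallyLE hballA)
      exact (ae_restrict_iff' hAm).2 (Filter.Eventually.of_forall hfnonneg)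
    linarith
  -- combine
  have hexp : Real.exp (-s * (β - MK)) * Real.exp (s * β) = Real.exp (s * MK) := by
    rw [← Real.exp_add]; ring_nf
  have hkey : (W + 1) / c * Real.exp (-s * (β - MK)) * (Real.exp (s * β) * c)
      = Real.exp (s * MK) * (W + 1) := by
    field_simp
    rw [← Real.exp_add]; ring_nf
  calc ∫ x in K, f x ≤ Real.exp (s * MK) * W := h1
    _ ≤ Real.exp (s * MK) * (W + 1) := by nlinarith [Real.exp_pos (s * MK)]
    _ = (W + 1) / c * Real.exp (-s * (β - MK)) * (Real.exp (s * β) * c) := hkey.symm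
    _ ≤ (W + 1) / c * Real.exp (-s * (β - MK)) * ∫ x in A, f x := by
        refine mul_le_mul_of_nonneg_left h2 ?_
        positivity
end

section
/- Let U ⊆ ℝⁿ be open, let g : U → ℝ be twice continuously differentiable, let m ∈ ℝⁿ, and define f : U × ℝⁿ → ℂ by f(x, θ) := exp( ⟨m − x, ∇g(x)⟩ + g(x) + i⟨m, θ⟩ ). Then for every j = 1, …, n and every (x, θ) ∈ U × ℝⁿ, (∂f/∂xʲ)(x,θ) + i Σ_{k=1}^{n} (∂²g/∂xʲ∂xᵏ)(x) (∂f/∂θ_k)(x,θ) + ( Σ_{k=1}^{n} (∂²g/∂xʲ∂xᵏ)(x) xᵏ ) f(x,θ) = 0. -/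
/-- The Hessian matrix of second partial derivatives of `f` at `x`. -/
noncomputable def Hess {n : ℕ} (f : (Fin n → ℝ) → ℝ) (x : Fin n → ℝ) :
    Matrix (Fin n) (Fin n) ℝ :=
  fun i j => fderiv ℝ (fun y => fderiv ℝ f y (Pi.single j 1)) x (Pi.single i 1)

lemma clm_eq_sum_single {n : ℕ} {M : Type*} [AddCommGroup M] [Module ℝ M]
    [TopologicalSpace M] (L : (Fin n → ℝ) →L[ℝ] M) (v : Fin n → ℝ) :
    L v = ∑ i, v i • L (Pi.single i 1) := by
  conv_lhs => rw [← Finset.univ_sum_single v]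
  rw [map_sum]
  refine Finset.sum_congr rfl fun i _ => ?_
  rw [← map_smul]
  congr 1
  ext j
  by_cases h : j = i <;> simp [h, Pi.single_apply]

theorem stmt_10 (n : ℕ) (U : Set (Fin n → ℝ)) (hU : IsOpen U)
    (g : (Fin n → ℝ) → ℝ) (hg : ContDiffOn ℝ 2 g U)
    (m : Fin n → ℝ)
    (f : (Fin n → ℝ) → (Fin n → ℝ) → ℂ)
    (hf : ∀ x θ, f x θ =
      Complex.exp (((fderiv ℝ g x (m - x) + g x : ℝ) : ℂ) +
        Complex.I * (∑ i, (m i : ℂ) * (θ i : ℂ)))) :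
    ∀ j : Fin n, ∀ x ∈ U, ∀ θ : Fin n → ℝ,
      fderiv ℝ (fun x' => f x' θ) x (Pi.single j 1)
        + Complex.I * ∑ k, (Hess g x j k : ℂ) *
            fderiv ℝ (fun θ' => f x θ') θ (Pi.single k 1)
        + ((∑ k, Hess g x j k * x k : ℝ) : ℂ) * f x θ = 0 := by
  intro j x hx θ
  have hx2 : ContDiffAt ℝ 2 g x := hg.contDiffAt (hU.mem_nhds hx)
  have hdg : DifferentiableAt ℝ g x := hx2.differentiableAt (by norm_num)
  have hdfg : DifferentiableAt ℝ (fderiv ℝ g) x :=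
    (hx2.fderiv_right (m := 1) (by norm_num)).differentiableAt (by norm_num)
  set B' := fderiv ℝ (fderiv ℝ g) x with hB'def
  have hB : HasFDerivAt (fderiv ℝ g) B' x := hdfg.hasFDerivAt
  -- Hessian entries
  have hHess : ∀ a b : Fin n, Hess g x a b = (B' (Pi.single a 1)) (Pi.single b 1) := by
    intro a b
    have hcomp := ((ContinuousLinearMap.apply ℝ ℝ
        (Pi.single b 1 : Fin n → ℝ)).hasFDerivAt.comp x hB).fderiv
    simp only [Hess]
    rw [show (fun y => fderiv ℝ g y (Pi.single b 1)) =
        (ContinuousLinearMap.apply ℝ ℝ (Pi.single b 1 : Fin n → ℝ)) ∘ (fderiv ℝ g) from rfl,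
      hcomp]
    rfl
  -- derivative of the x-part exponent
  have hu : HasFDerivAt (fun x' : Fin n → ℝ => m - x')
      ((0 : (Fin n → ℝ) →L[ℝ] (Fin n → ℝ)) - ContinuousLinearMap.id ℝ _) x :=
    (hasFDerivAt_const m x).sub (hasFDerivAt_id x)
  have hA : HasFDerivAt (fun x' => fderiv ℝ g x' (m - x') + g x')
      ((((fderiv ℝ g x).comp ((0 : (Fin n → ℝ) →L[ℝ] (Fin n → ℝ)) -
          ContinuousLinearMap.id ℝ _) + B'.flip (m - x))) + fderiv ℝ g x) x :=
    (hB.clm_apply hu).add hdg.hasFDerivAt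
  set D := (((fderiv ℝ g x).comp ((0 : (Fin n → ℝ) →L[ℝ] (Fin n → ℝ)) -
      ContinuousLinearMap.id ℝ _) + B'.flip (m - x))) + fderiv ℝ g x with hDdef
  have hDj : D (Pi.single j 1) = (B' (Pi.single j 1)) (m - x) := by
    simp [hDdef, ContinuousLinearMap.sub_apply]
  -- x-direction fderiv of f
  set C : ℂ := Complex.I * (∑ i, (m i : ℂ) * (θ i : ℂ)) with hCdef
  have hfx : (fun x' => f x' θ) = fun x' =>
      Complex.exp (((fderiv ℝ g x' (m - x') + g x' : ℝ) : ℂ) + C) :=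
    funext fun x' => hf x' θ
  have hFx : HasFDerivAt (fun x' => f x' θ)
      (Complex.exp (((fderiv ℝ g x (m - x) + g x : ℝ) : ℂ) + C) •
        (Complex.ofRealCLM.comp D)) x := by
    rw [hfx]
    exact ((Complex.ofRealCLM.hasFDerivAt.comp x hA).add_const C).cexp
  have hfxθ : f x θ = Complex.exp (((fderiv ℝ g x (m - x) + g x : ℝ) : ℂ) + C) := hf x θ
  have hxval : fderiv ℝ (fun x' => f x' θ) x (Pi.single j 1)
      = f x θ * ((B' (Pi.single j 1)) (m - x) : ℝ) := by
    rw [hFx.fderiv]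
    simp [hDj, hfxθ, mul_comm]
  -- θ-direction fderiv of f
  set T : (Fin n → ℝ) →L[ℝ] ℂ :=
    ∑ i, (Complex.I * (m i : ℂ)) • (Complex.ofRealCLM.comp (ContinuousLinearMap.proj i))
    with hTdef
  have hTapp : ∀ v : Fin n → ℝ, T v = Complex.I * ∑ i, (m i : ℂ) * (v i : ℂ) := by
    intro v
    simp only [hTdef, ContinuousLinearMap.sum_apply, ContinuousLinearMap.smul_apply,
      ContinuousLinearMap.comp_apply, ContinuousLinearMap.proj_apply,
      Complex.ofRealCLM_apply, smul_eq_mul, Finset.mul_sum]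
    exact Finset.sum_congr rfl fun i _ => by ring
  have hTsingle : ∀ k : Fin n, T (Pi.single k 1) = Complex.I * (m k : ℂ) := by
    intro k
    rw [hTapp]
    congr 1
    rw [Finset.sum_eq_single k]
    · simp
    · intro b _ hb
      simp [Pi.single_apply, hb]
    · simp
  have hfθ : (fun θ' => f x θ') = fun θ' =>
      Complex.exp (((fderiv ℝ g x (m - x) + g x : ℝ) : ℂ) + T θ') := by
    funext θ'
    rw [hf x θ', hTapp θ']
  have hFθ : HasFDerivAt (fun θ' => f x θ')
      (Complex.exp (((fderiv ℝ g x (m - x) + g x : ℝ) : ℂ) + T θ) • T) θ := by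
    rw [hfθ]
    simpa using ((hasFDerivAt_const _ θ).add T.hasFDerivAt).cexp
  have hθval : ∀ k : Fin n, fderiv ℝ (fun θ' => f x θ') θ (Pi.single k 1)
      = f x θ * (Complex.I * (m k : ℂ)) := by
    intro k
    rw [hFθ.fderiv]
    have hTθ : T θ = C := hTapp θ
    simp only [ContinuousLinearMap.smul_apply, hTsingle k, smul_eq_mul, hTθ, ← hfxθ]
  -- expand (B' e_j)(m - x) as a sum
  have hBsum : ((B' (Pi.single j 1)) (m - x) : ℝ)
      = ∑ k, (m k - x k) * Hess g x j k := by
    rw [clm_eq_sum_single (B' (Pi.single j 1)) (m - x)]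
    exact Finset.sum_congr rfl fun k _ => by
      rw [hHess j k]; simp [smul_eq_mul]
  -- final algebra
  rw [hxval, hBsum]
  simp only [hθval]
  push_cast
  rw [Finset.mul_sum, Finset.mul_sum, Finset.sum_mul, ← Finset.sum_add_distrib,
    ← Finset.sum_add_distrib]
  refine Finset.sum_eq_zero fun k _ => ?_
  have hI : Complex.I * Complex.I = -1 := Complex.I_mul_I
  linear_combination ((Hess g x j k : ℂ) * f x θ * (m k)) * hI
end

section
/- Let U ⊆ ℝⁿ be open, let g : U → ℝ be continuously differentiable, and let m ∈ ℤⁿ. On U × ℝⁿ define f_m(x, θ) := e^{i⟨m,θ⟩} and the first-order differential operator (X_g f)(x,θ) := − Σ_{j=1}^{n} (∂g/∂xʲ)(x) (∂f/∂θ_j)(x,θ). Then for every k ≥ 0, X_gᵏ f_m = (−i⟨m, ∇g(x)⟩)ᵏ f_m, and for every (x, θ) ∈ U × ℝⁿ the series Σ_{k≥0} (iᵏ/k!) (X_gᵏ f_m)(x, θ) converges absolutely with sum e^{⟨m, ∇g(x)⟩} e^{i⟨m, θ⟩}. -/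
/-- The Hamiltonian vector field of `g ∘ pr₁` with respect to `ω = Σ dxʲ∧dθ_j`,
acting as a first-order differential operator on functions on `U × ℝⁿ`:
`(X_g f)(x,θ) = − Σ_j (∂g/∂xʲ)(x) (∂f/∂θ_j)(x,θ)`. -/
noncomputable def Xop {n : ℕ} (g : (Fin n → ℝ) → ℝ)
    (f : (Fin n → ℝ) → (Fin n → ℝ) → ℂ) : (Fin n → ℝ) → (Fin n → ℝ) → ℂ :=
  fun x θ => -∑ j, (fderiv ℝ g x (Pi.single j 1) : ℂ) *
    fderiv ℝ (fun θ' => f x θ') θ (Pi.single j 1)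

/-- The torus character `f_m(x,θ) = e^{i⟨m,θ⟩}`. -/
noncomputable def charFn {n : ℕ} (m : Fin n → ℤ) :
    (Fin n → ℝ) → (Fin n → ℝ) → ℂ :=
  fun _ θ => Complex.exp (Complex.I * ∑ j, ((m j : ℝ) : ℂ) * (θ j : ℂ))

noncomputable def Lclm {n : ℕ} (m : Fin n → ℤ) : (Fin n → ℝ) →L[ℝ] ℂ :=
  Complex.I • ∑ j, ((m j : ℝ) : ℂ) • (Complex.ofRealCLM.comp (ContinuousLinearMap.proj j))

lemma Lclm_apply {n : ℕ} (m : Fin n → ℤ) (θ : Fin n → ℝ) :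
    Lclm m θ = Complex.I * ∑ j, ((m j : ℝ) : ℂ) * (θ j : ℂ) := by
  simp [Lclm, ContinuousLinearMap.sum_apply, smul_eq_mul]

lemma char_hasFDeriv {n : ℕ} (m : Fin n → ℤ) (θ : Fin n → ℝ) :
    HasFDerivAt (fun θ' : Fin n → ℝ =>
        Complex.exp (Complex.I * ∑ j, ((m j : ℝ) : ℂ) * (θ' j : ℂ)))
      (Complex.exp (Complex.I * ∑ j, ((m j : ℝ) : ℂ) * (θ j : ℂ)) • Lclm m) θ := by
  have h : HasFDerivAt (fun θ' : Fin n → ℝ => Lclm m θ') (Lclm m) θ :=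
    (Lclm m).hasFDerivAt
  have h2 := h.cexp
  simpa [Lclm_apply] using h2

lemma fderiv_char_apply {n : ℕ} (m : Fin n → ℤ) (θ : Fin n → ℝ) (j : Fin n) :
    fderiv ℝ (fun θ' : Fin n → ℝ =>
        Complex.exp (Complex.I * ∑ i, ((m i : ℝ) : ℂ) * (θ' i : ℂ))) θ (Pi.single j 1) =
      Complex.exp (Complex.I * ∑ i, ((m i : ℝ) : ℂ) * (θ i : ℂ)) *
        (Complex.I * ((m j : ℝ) : ℂ)) := by
  rw [(char_hasFDeriv m θ).fderiv]
  rw [ContinuousLinearMap.smul_apply, Lclm_apply, smul_eq_mul]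
  congr 2
  rw [Finset.sum_eq_single j]
  · simp
  · intro i _ hi; simp [Pi.single_apply, hi]
  · simp

theorem stmt_13 (n : ℕ) (U : Set (Fin n → ℝ)) (hU : IsOpen U)
    (g : (Fin n → ℝ) → ℝ) (hg : ContDiffOn ℝ 1 g U)
    (m : Fin n → ℤ) :
    (∀ k : ℕ, ∀ x θ : Fin n → ℝ,
      ((Xop g)^[k] (charFn m)) x θ =
        (-Complex.I * ((∑ j, (m j : ℝ) * fderiv ℝ g x (Pi.single j 1) : ℝ) : ℂ)) ^ k *
          charFn m x θ) ∧
    (∀ x ∈ U, ∀ θ : Fin n → ℝ,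
      Summable (fun k : ℕ =>
        ‖(Complex.I ^ k / (Nat.factorial k : ℂ)) * ((Xop g)^[k] (charFn m)) x θ‖) ∧
      ∑' k : ℕ, (Complex.I ^ k / (Nat.factorial k : ℂ)) * ((Xop g)^[k] (charFn m)) x θ =
        (Real.exp (∑ j, (m j : ℝ) * fderiv ℝ g x (Pi.single j 1)) : ℂ) *
          Complex.exp (Complex.I * ∑ j, ((m j : ℝ) : ℂ) * (θ j : ℂ))) := by
  set s : (Fin n → ℝ) → ℝ := fun x => ∑ j, (m j : ℝ) * fderiv ℝ g x (Pi.single j 1) with hs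
  have scast : ∀ x, ((s x : ℝ) : ℂ) =
      ∑ j, ((m j : ℝ) : ℂ) * ((fderiv ℝ g x (Pi.single j 1) : ℝ) : ℂ) := by
    intro x; rw [hs]; push_cast; ring_nf
  have hiter : ∀ k : ℕ, ∀ x θ : Fin n → ℝ,
      ((Xop g)^[k] (charFn m)) x θ = (-Complex.I * ((s x : ℝ) : ℂ)) ^ k * charFn m x θ := by
    intro k
    induction k with
    | zero => intro x θ; simp
    | succ k ih =>
      intro x θ
      rw [Function.iterate_succ_apply']
      have hfun : (fun θ' => ((Xop g)^[k] (charFn m)) x θ') =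
          fun θ' => (-Complex.I * ((s x : ℝ) : ℂ)) ^ k * charFn m x θ' := by
        funext θ'; exact ih x θ'
      have hdiff : ∀ θ' : Fin n → ℝ, DifferentiableAt ℝ
          (fun θ'' : Fin n → ℝ =>
            Complex.exp (Complex.I * ∑ i, ((m i : ℝ) : ℂ) * (θ'' i : ℂ))) θ' :=
        fun θ' => (char_hasFDeriv m θ').differentiableAt
      rw [Xop]
      simp only [hfun]
      have hfd : ∀ j, fderiv ℝ
          (fun θ' => (-Complex.I * ((s x : ℝ) : ℂ)) ^ k * charFn m x θ') θ (Pi.single j 1) =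
          (-Complex.I * ((s x : ℝ) : ℂ)) ^ k *
            (charFn m x θ * (Complex.I * ((m j : ℝ) : ℂ))) := by
        intro j
        rw [show (fun θ' => (-Complex.I * ((s x : ℝ) : ℂ)) ^ k * charFn m x θ') =
            fun θ' => (-Complex.I * ((s x : ℝ) : ℂ)) ^ k *
              Complex.exp (Complex.I * ∑ i, ((m i : ℝ) : ℂ) * (θ' i : ℂ)) from rfl]
        rw [fderiv_const_mul (hdiff θ)]
        rw [ContinuousLinearMap.smul_apply, fderiv_char_apply, smul_eq_mul]
        rfl
      simp only [hfd]
      have : ∑ j, (fderiv ℝ g x (Pi.single j 1) : ℂ) *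
          ((-Complex.I * ((s x : ℝ) : ℂ)) ^ k * (charFn m x θ * (Complex.I * ((m j : ℝ) : ℂ)))) =
          ((-Complex.I * ((s x : ℝ) : ℂ)) ^ k * charFn m x θ * Complex.I) *
            ∑ j, ((m j : ℝ) : ℂ) * ((fderiv ℝ g x (Pi.single j 1) : ℝ) : ℂ) := by
        rw [Finset.mul_sum]
        exact Finset.sum_congr rfl fun j _ => by ring
      rw [this, ← scast]
      ring
  constructor
  · exact hiter
  · intro x hx θ
    have hterm : ∀ k : ℕ, (Complex.I ^ k / (Nat.factorial k : ℂ)) * ((Xop g)^[k] (charFn m)) x θ =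
        (((s x : ℝ) : ℂ) ^ k / (Nat.factorial k : ℂ)) * charFn m x θ := by
      intro k
      rw [hiter k x θ]
      have : Complex.I ^ k * (-Complex.I * ((s x : ℝ) : ℂ)) ^ k = ((s x : ℝ) : ℂ) ^ k := by
        rw [← mul_pow]
        congr 1
        rw [show Complex.I * (-Complex.I * ((s x : ℝ) : ℂ)) =
            -(Complex.I * Complex.I) * ((s x : ℝ) : ℂ) from by ring, Complex.I_mul_I]
        ring
      field_simp
      rw [← mul_pow, mul_comm (charFn m x θ)]
      have h3 : Complex.I * -(Complex.I * ((s x : ℝ) : ℂ)) = ((s x : ℝ) : ℂ) := by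
        rw [show Complex.I * -(Complex.I * ((s x : ℝ) : ℂ)) =
          -(Complex.I * Complex.I) * ((s x : ℝ) : ℂ) from by ring, Complex.I_mul_I]
        ring
      rw [h3]
    have hsum : Summable (fun k : ℕ => ‖(((s x : ℝ) : ℂ) ^ k / (Nat.factorial k : ℂ)) * charFn m x θ‖) := by
      have : ∀ k : ℕ, ‖(((s x : ℝ) : ℂ) ^ k / (Nat.factorial k : ℂ)) * charFn m x θ‖ =
          (|s x| ^ k / (Nat.factorial k : ℝ)) * ‖charFn m x θ‖ := by
        intro k
        rw [norm_mul, norm_div, norm_pow, Complex.norm_real, Real.norm_eq_abs]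
        norm_num
      simp only [this]
      exact (Real.summable_pow_div_factorial |s x|).mul_right _
    constructor
    · simpa only [hterm] using hsum
    · have h1 : ∑' k : ℕ, (Complex.I ^ k / (Nat.factorial k : ℂ)) * ((Xop g)^[k] (charFn m)) x θ =
          ∑' k : ℕ, (((s x : ℝ) : ℂ) ^ k / (Nat.factorial k : ℂ)) * charFn m x θ :=
        tsum_congr hterm
      rw [h1, tsum_mul_right]
      have h2 : Complex.exp ((s x : ℝ) : ℂ) =
          ∑' k : ℕ, ((s x : ℝ) : ℂ) ^ k / (Nat.factorial k : ℂ) := by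
        rw [Complex.exp_eq_exp_ℂ, NormedSpace.exp_eq_tsum_div]
      rw [← h2, ← Complex.ofReal_exp]
      rfl
end

section
/- Let U ⊆ ℝⁿ be a nonempty bounded open convex set and let g : U → ℝ be differentiable and strictly convex. Assume that for every sequence (x_k) in U converging to a point of the boundary of U, ‖∇g(x_k)‖ → ∞. Then the gradient map x ↦ ∇g(x) is a bijection from U onto ℝⁿ. -/
open Filter Set

private lemma line_mem {n : ℕ} {U : Set (Fin n → ℝ)} (hUconv : Convex ℝ U)
    {a b : Fin n → ℝ} (ha : a ∈ U) (hb : b ∈ U) {t : ℝ} (ht0 : 0 ≤ t) (ht1 : t ≤ 1) :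
    a + t • (b - a) ∈ U := by
  have h := hUconv ha hb (by linarith : (0:ℝ) ≤ 1 - t) ht0 (by ring)
  convert h using 1
  module

private lemma hasDerivAt_line {n : ℕ} {U : Set (Fin n → ℝ)} (hUopen : IsOpen U)
    {g : (Fin n → ℝ) → ℝ} (hgdiff : DifferentiableOn ℝ g U)
    {a v : Fin n → ℝ} {t : ℝ} (ht : a + t • v ∈ U) :
    HasDerivAt (fun s : ℝ => g (a + s • v)) (fderiv ℝ g (a + t • v) v) t := by
  have hd : DifferentiableAt ℝ g (a + t • v) :=
    hgdiff.differentiableAt (hUopen.mem_nhds ht)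
  have hline : HasDerivAt (fun s : ℝ => a + s • v) v t := by
    simpa using ((hasDerivAt_id t).smul_const v).const_add a
  exact hd.hasFDerivAt.comp_hasDerivAt t hline

private lemma strictConvexOn_line {n : ℕ} {U : Set (Fin n → ℝ)} (hUconv : Convex ℝ U)
    {g : (Fin n → ℝ) → ℝ} (hgsc : StrictConvexOn ℝ U g)
    {a b : Fin n → ℝ} (ha : a ∈ U) (hb : b ∈ U) (hab : a ≠ b) :
    StrictConvexOn ℝ (Icc (0:ℝ) 1) (fun s : ℝ => g (a + s • (b - a))) := by
  refine ⟨convex_Icc 0 1, fun s hs t ht hst c d hc hd hcd => ?_⟩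
  have h1 := line_mem hUconv ha hb hs.1 hs.2
  have h2 := line_mem hUconv ha hb ht.1 ht.2
  have hne : a + s • (b - a) ≠ a + t • (b - a) := by
    intro hEq
    have h3 : (s - t) • (b - a) = 0 := by
      rw [sub_smul, sub_eq_zero]
      exact add_left_cancel hEq
    rcases smul_eq_zero.mp h3 with h4 | h4
    · exact hst (sub_eq_zero.mp h4)
    · exact hab (sub_eq_zero.mp h4).symm
  have key := hgsc.2 h1 h2 hne hc hd hcd
  obtain rfl : d = 1 - c := by linarith
  have hpt : a + (c • s + (1 - c) • t) • (b - a)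
      = c • (a + s • (b - a)) + (1 - c) • (a + t • (b - a)) := by
    simp only [smul_eq_mul]
    module
  calc (fun s : ℝ => g (a + s • (b - a))) (c • s + (1 - c) • t)
      = g (c • (a + s • (b - a)) + (1 - c) • (a + t • (b - a))) := by rw [← hpt]
    _ < c • g (a + s • (b - a)) + (1 - c) • g (a + t • (b - a)) := key

private lemma grad_ineq {n : ℕ} {U : Set (Fin n → ℝ)} (hUopen : IsOpen U)
    (hUconv : Convex ℝ U) {g : (Fin n → ℝ) → ℝ} (hgdiff : DifferentiableOn ℝ g U)
    (hgsc : StrictConvexOn ℝ U g) {x w : Fin n → ℝ} (hx : x ∈ U) (hw : w ∈ U) :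
    fderiv ℝ g x (w - x) ≤ g w - g x := by
  rcases eq_or_ne x w with rfl | hxw
  · simp
  have hconv := (strictConvexOn_line hUconv hgsc hx hw hxw).convexOn
  have hd0 : HasDerivAt (fun s : ℝ => g (x + s • (w - x))) (fderiv ℝ g x (w - x)) 0 := by
    have h := hasDerivAt_line hUopen hgdiff (t := (0:ℝ)) (a := x) (v := w - x)
      (by simpa using hx)
    simpa using h
  have h := hconv.le_slope_of_hasDerivAt ⟨le_refl 0, zero_le_one⟩
    ⟨zero_le_one, le_refl 1⟩ zero_lt_one hd0
  rw [slope_def_field] at h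
  simpa using h

private lemma inj_ineq {n : ℕ} {U : Set (Fin n → ℝ)} (hUopen : IsOpen U)
    (hUconv : Convex ℝ U) {g : (Fin n → ℝ) → ℝ} (hgdiff : DifferentiableOn ℝ g U)
    (hgsc : StrictConvexOn ℝ U g) {a b : Fin n → ℝ} (ha : a ∈ U) (hb : b ∈ U)
    (hab : a ≠ b) :
    fderiv ℝ g a (b - a) < fderiv ℝ g b (b - a) := by
  have hsc := strictConvexOn_line hUconv hgsc ha hb hab
  have hd0 : HasDerivAt (fun s : ℝ => g (a + s • (b - a))) (fderiv ℝ g a (b - a)) 0 := by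
    have h := hasDerivAt_line hUopen hgdiff (t := (0:ℝ)) (a := a) (v := b - a)
      (by simpa using ha)
    simpa using h
  have hd1 : HasDerivAt (fun s : ℝ => g (a + s • (b - a))) (fderiv ℝ g b (b - a)) 1 := by
    have h := hasDerivAt_line hUopen hgdiff (t := (1:ℝ)) (a := a) (v := b - a)
      (by simpa using hb)
    simpa using h
  have h1 := hsc.lt_slope_of_hasDerivAt ⟨le_refl 0, zero_le_one⟩
    ⟨zero_le_one, le_refl 1⟩ zero_lt_one hd0
  have h2 := hsc.slope_lt_of_hasDerivAt ⟨le_refl 0, zero_le_one⟩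
    ⟨zero_le_one, le_refl 1⟩ zero_lt_one hd1
  linarith

private lemma fderiv_apply_sum {n : ℕ} {U : Set (Fin n → ℝ)} (hUopen : IsOpen U)
    {g : (Fin n → ℝ) → ℝ} (hgdiff : DifferentiableOn ℝ g U)
    {x : Fin n → ℝ} (hx : x ∈ U) (v : Fin n → ℝ) :
    fderiv ℝ g x v = ∑ j, v j * fderiv ℝ g x (Pi.single j 1) := by
  have hv : v = ∑ j, v j • (Pi.single j 1 : Fin n → ℝ) := by
    funext i
    simp [Pi.single_apply]
  conv_lhs => rw [hv]
  rw [map_sum]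
  simp [smul_eq_mul]

set_option maxHeartbeats 1600000 in
theorem stmt_14 (n : ℕ) (U : Set (Fin n → ℝ)) (hUne : U.Nonempty)
    (hUopen : IsOpen U) (hUbdd : Bornology.IsBounded U) (hUconv : Convex ℝ U)
    (g : (Fin n → ℝ) → ℝ) (hgdiff : DifferentiableOn ℝ g U)
    (hgsc : StrictConvexOn ℝ U g)
    (hblow : ∀ (x : ℕ → Fin n → ℝ) (p : Fin n → ℝ),
      (∀ k, x k ∈ U) → p ∈ frontier U → Tendsto x atTop (nhds p) →
      Tendsto (fun k => Real.sqrt (∑ j, (fderiv ℝ g (x k) (Pi.single j 1)) ^ 2))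
        atTop atTop) :
    Set.BijOn (fun x => (fun j => fderiv ℝ g x (Pi.single j 1))) U Set.univ := by
  refine ⟨fun x _ => trivial, ?_, ?_⟩
  · -- injectivity
    intro a ha b hb hEq
    by_contra hab
    have hlt := inj_ineq hUopen hUconv hgdiff hgsc ha hb hab
    rw [fderiv_apply_sum hUopen hgdiff ha, fderiv_apply_sum hUopen hgdiff hb] at hlt
    have hj : ∀ j, fderiv ℝ g a (Pi.single j 1) = fderiv ℝ g b (Pi.single j 1) :=
      fun j => congrFun hEq j
    simp only [hj] at hlt
    exact lt_irrefl _ hlt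
  · -- surjectivity
    intro y _
    obtain ⟨x₀, hx₀⟩ := hUne
    obtain ⟨ρ, hρpos, hρ⟩ := Metric.isOpen_iff.mp hUopen x₀ hx₀
    set r := ρ / 2 with hrdef
    have hrpos : 0 < r := by positivity
    have hball : Metric.closedBall x₀ r ⊆ U := fun v hv =>
      hρ (lt_of_le_of_lt (Metric.mem_closedBall.mp hv) (by simp [hrdef]; linarith))
    obtain ⟨D, hD⟩ := hUbdd.subset_closedBall x₀
    -- the gradient shifted by y
    set Gh : (Fin n → ℝ) → (Fin n → ℝ) :=
      fun x j => fderiv ℝ g x (Pi.single j 1) - y j with hGhdef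
    -- the linear functional
    set L : (Fin n → ℝ) →L[ℝ] ℝ :=
      ∑ j, y j • (ContinuousLinearMap.proj j : (Fin n → ℝ) →L[ℝ] ℝ) with hLdef
    have hLapp : ∀ v : Fin n → ℝ, L v = ∑ j, y j * v j := by
      intro v
      simp [hLdef, ContinuousLinearMap.sum_apply]
    have hLsingle : ∀ j, L (Pi.single j 1) = y j := by
      intro j
      rw [hLapp]
      simp [Pi.single_apply]
    set h : (Fin n → ℝ) → ℝ := fun x => g x - L x with hhdef
    have hhdiff : ∀ x ∈ U, DifferentiableAt ℝ h x := fun x hx =>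
      (hgdiff.differentiableAt (hUopen.mem_nhds hx)).sub L.differentiableAt
    have hhcont : ContinuousOn h U := fun x hx =>
      ((hhdiff x hx).continuousAt).continuousWithinAt
    -- gradient inequality for h in coordinates
    have hgradh : ∀ x ∈ U, ∀ w ∈ U,
        (∑ j, Gh x j * (w j - x j)) ≤ h w - h x := by
      intro x hx w hw
      have h1 := grad_ineq hUopen hUconv hgdiff hgsc hx hw
      rw [fderiv_apply_sum hUopen hgdiff hx] at h1
      have h2 : ∀ j, (w - x) j = w j - x j := fun j => rfl
      simp only [h2] at h1
      have h3 : L w - L x = ∑ j, y j * (w j - x j) := by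
        rw [hLapp, hLapp, ← Finset.sum_sub_distrib]
        exact Finset.sum_congr rfl fun j _ => by ring
      have h4 : (∑ j, Gh x j * (w j - x j))
          = (∑ j, (w j - x j) * fderiv ℝ g x (Pi.single j 1))
            - ∑ j, y j * (w j - x j) := by
        rw [← Finset.sum_sub_distrib]
        exact Finset.sum_congr rfl fun j _ => by rw [hGhdef]; ring
      rw [h4]
      simp only [hhdef]
      linarith
    -- bounded below
    have hLB : ∀ z ∈ U, h x₀ - (∑ j, |Gh x₀ j|) * D ≤ h z := by
      intro z hz
      have h1 := hgradh x₀ hx₀ z hz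
      have h2 : ∀ j, -(|Gh x₀ j| * D) ≤ Gh x₀ j * (z j - x₀ j) := by
        intro j
        have hzj : |z j - x₀ j| ≤ D := by
          have hzD := Metric.mem_closedBall.mp (hD hz)
          calc |z j - x₀ j| = dist (z j) (x₀ j) := (Real.dist_eq _ _).symm
            _ ≤ dist z x₀ := dist_le_pi_dist z x₀ j
            _ ≤ D := hzD
        have habs : |Gh x₀ j * (z j - x₀ j)| ≤ |Gh x₀ j| * D := by
          rw [abs_mul]
          exact mul_le_mul_of_nonneg_left hzj (abs_nonneg _)
        linarith [neg_abs_le (Gh x₀ j * (z j - x₀ j))]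
      have h3 : -((∑ j, |Gh x₀ j|) * D) ≤ ∑ j, Gh x₀ j * (z j - x₀ j) := by
        have h5 := Finset.sum_le_sum (fun j (_ : j ∈ Finset.univ) => h2 j)
        calc -((∑ j, |Gh x₀ j|) * D) = ∑ j, -(|Gh x₀ j| * D) := by
              rw [Finset.sum_neg_distrib, Finset.sum_mul]
          _ ≤ _ := h5
      linarith
    set S := h '' U with hSdef
    have hSne : S.Nonempty := ⟨h x₀, ⟨x₀, hx₀, rfl⟩⟩
    have hSbdd : BddBelow S :=
      ⟨h x₀ - (∑ j, |Gh x₀ j|) * D, by rintro _ ⟨z, hz, rfl⟩; exact hLB z hz⟩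
    set m := sInf S with hmdef
    have hmle : ∀ z ∈ U, m ≤ h z := fun z hz => csInf_le hSbdd ⟨z, hz, rfl⟩
    have hminseq : ∀ k : ℕ, ∃ x, x ∈ U ∧ h x < m + (1 / ((k:ℝ)+1))^2 := by
      intro k
      have hpos : (0:ℝ) < (1 / ((k:ℝ)+1))^2 := by positivity
      obtain ⟨s, hsS, hslt⟩ := (csInf_lt_iff hSbdd hSne).mp
        (by linarith : sInf S < m + (1/((k:ℝ)+1))^2)
      obtain ⟨x, hxU, rfl⟩ := hsS
      exact ⟨x, hxU, hslt⟩
    choose w hwU hwlt using hminseq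
    have hKcomp : IsCompact (closure U) :=
      Metric.isCompact_iff_isClosed_bounded.mpr ⟨isClosed_closure, hUbdd.closure⟩
    obtain ⟨p, hpcl, φ, hφ, hwp⟩ := hKcomp.tendsto_subseq (fun k => subset_closure (hwU k))
    have hsq_to_zero : Tendsto (fun k : ℕ => (1/((k:ℝ)+1))^2) atTop (nhds 0) := by
      have h1 : Tendsto (fun k : ℕ => 1/((k:ℝ)+1)) atTop (nhds 0) :=
        tendsto_one_div_add_atTop_nhds_zero_nat
      simpa using h1.pow 2
    have hφle : ∀ k : ℕ, (1/((φ k : ℝ)+1))^2 ≤ (1/((k:ℝ)+1))^2 := by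
      intro k
      have h1 : (k:ℝ) + 1 ≤ (φ k : ℝ) + 1 := by
        have h0 : k ≤ φ k := hφ.le_apply
        exact_mod_cast Nat.succ_le_succ h0
      gcongr
    by_cases hpU : p ∈ U
    · -- interior minimum
      have hc : Tendsto (fun k => h (w (φ k))) atTop (nhds (h p)) :=
        ((hhcont.continuousAt (hUopen.mem_nhds hpU)).tendsto).comp hwp
      have hto : Tendsto (fun k => h (w (φ k))) atTop (nhds m) := by
        have hupper : Tendsto (fun k : ℕ => m + (1/((k:ℝ)+1))^2) atTop (nhds m) := by
          simpa using tendsto_const_nhds.add hsq_to_zero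
        exact tendsto_of_tendsto_of_tendsto_of_le_of_le tendsto_const_nhds hupper
          (fun k => hmle _ (hwU (φ k)))
          (fun k => le_trans (hwlt (φ k)).le (by linarith [hφle k]))
      have hpm : h p = m := tendsto_nhds_unique hc hto
      have hloc : IsLocalMin h p :=
        Filter.eventually_of_mem (hUopen.mem_nhds hpU) (fun z hz => hpm ▸ hmle z hz)
      have hzero : fderiv ℝ h p = 0 := hloc.fderiv_eq_zero
      have hfd : fderiv ℝ h p = fderiv ℝ g p - L := by
        rw [hhdef]
        rw [fderiv_fun_sub (hgdiff.differentiableAt (hUopen.mem_nhds hpU)) L.differentiableAt,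
          L.fderiv]
      have hgL : fderiv ℝ g p = L := by
        rw [hfd] at hzero
        exact sub_eq_zero.mp hzero
      refine ⟨p, hpU, ?_⟩
      funext j
      simp only [hgL, hLsingle]
    · -- boundary case: contradiction
      exfalso
      have hpfr : p ∈ frontier U := by
        rw [hUopen.frontier_eq]; exact ⟨hpcl, hpU⟩
      set z : ℕ → (Fin n → ℝ) :=
        fun k => w (φ k) + (1/((k:ℝ)+1)) • (x₀ - w (φ k)) with hzdef
      have hε0 : ∀ k : ℕ, 0 < 1/((k:ℝ)+1) := fun k => by positivity
      have hε1 : ∀ k : ℕ, 1/((k:ℝ)+1) ≤ 1 := fun k => by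
        rw [div_le_one (by positivity)]; linarith [Nat.cast_nonneg (α := ℝ) k]
      have hzU : ∀ k, z k ∈ U := by
        intro k
        have h1 := hUconv (hwU (φ k)) hx₀ (by linarith [hε1 k] : (0:ℝ) ≤ 1 - 1/((k:ℝ)+1))
          (hε0 k).le (by ring)
        convert h1 using 1
        simp only [hzdef]
        module
      have hzp : Tendsto z atTop (nhds p) := by
        have h1 : Tendsto (fun k : ℕ => 1/((k:ℝ)+1)) atTop (nhds 0) :=
          tendsto_one_div_add_atTop_nhds_zero_nat
        have h2 : Tendsto (fun k => x₀ - w (φ k)) atTop (nhds (x₀ - p)) :=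
          tendsto_const_nhds.sub hwp
        have h3 := hwp.add (h1.smul h2)
        have h4 : p + (0:ℝ) • (x₀ - p) = p := by simp
        exact h4 ▸ h3
      have hN := hblow z p hzU hpfr hzp
      -- Euclidean norm facts
      have hnorm_eq : ∀ v : Fin n → ℝ, Real.sqrt (∑ j, v j ^ 2)
          = ‖(WithLp.equiv 2 (Fin n → ℝ)).symm v‖ := by
        intro v
        rw [EuclideanSpace.norm_eq]
        congr 1
        refine Finset.sum_congr rfl fun j _ => ?_
        rw [show ((WithLp.equiv 2 (Fin n → ℝ)).symm v) j = v j from rfl, Real.norm_eq_abs, sq_abs]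
      have hNh : Tendsto (fun k => Real.sqrt (∑ j, (Gh (z k) j)^2)) atTop atTop := by
        have hle : ∀ k, Real.sqrt (∑ j, (fderiv ℝ g (z k) (Pi.single j 1))^2)
            - Real.sqrt (∑ j, (y j)^2) ≤ Real.sqrt (∑ j, (Gh (z k) j)^2) := by
          intro k
          rw [hnorm_eq, hnorm_eq, hnorm_eq]
          have heq : (WithLp.equiv 2 (Fin n → ℝ)).symm (Gh (z k))
              = (WithLp.equiv 2 (Fin n → ℝ)).symm (fun j => fderiv ℝ g (z k) (Pi.single j 1))
                - (WithLp.equiv 2 (Fin n → ℝ)).symm y := rfl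
          rw [heq]
          exact norm_sub_norm_le _ _
        have h2 := tendsto_atTop_add_const_right atTop
          (-(Real.sqrt (∑ j, (y j)^2))) hN
        refine tendsto_atTop_mono (fun k => ?_) h2
        have := hle k
        linarith
      obtain ⟨C, hC⟩ := (isCompact_closedBall x₀ r).exists_bound_of_continuousOn
        (hhcont.mono hball)
      -- key lower bound
      have hA : ∀ k, -1 ≤ ∑ j, Gh (z k) j * (x₀ j - z k j) := by
        intro k
        have hw_z : ∀ j, w (φ k) j - z k j = -(1/((k:ℝ)+1)) * (x₀ j - w (φ k) j) := by
          intro j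
          simp only [hzdef, Pi.add_apply, Pi.smul_apply, Pi.sub_apply, smul_eq_mul]
          ring
        have hx_z : ∀ j, x₀ j - z k j = (1 - 1/((k:ℝ)+1)) * (x₀ j - w (φ k) j) := by
          intro j
          simp only [hzdef, Pi.add_apply, Pi.smul_apply, Pi.sub_apply, smul_eq_mul]
          ring
        have h1 := hgradh (z k) (hzU k) (w (φ k)) (hwU (φ k))
        have hwm : h (w (φ k)) < m + (1/((k:ℝ)+1))^2 :=
          lt_of_lt_of_le (hwlt (φ k)) (by linarith [hφle k])
        have hzm : m ≤ h (z k) := hmle _ (hzU k)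
        have hsub : h (w (φ k)) - h (z k) ≤ (1/((k:ℝ)+1))^2 := le_of_lt <| by
          calc h (w (φ k)) - h (z k) < (m + (1/((k:ℝ)+1))^2) - h (z k) :=
                sub_lt_sub_right hwm _
            _ ≤ (m + (1/((k:ℝ)+1))^2) - m := sub_le_sub_left hzm _
            _ = (1/((k:ℝ)+1))^2 := add_sub_cancel_left m _
        have h2 : ∑ j, Gh (z k) j * (w (φ k) j - z k j) ≤ (1/((k:ℝ)+1))^2 :=
          le_trans h1 hsub
        have h3 : ∑ j, Gh (z k) j * (w (φ k) j - z k j)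
            = -(1/((k:ℝ)+1)) * ∑ j, Gh (z k) j * (x₀ j - w (φ k) j) := by
          rw [Finset.mul_sum]
          exact Finset.sum_congr rfl fun j _ => by rw [hw_z j]; ring
        have h4 : -(1/((k:ℝ)+1)) ≤ ∑ j, Gh (z k) j * (x₀ j - w (φ k) j) := by
          rw [h3] at h2
          nlinarith [hε0 k, sq_nonneg (1/((k:ℝ)+1))]
        have h5 : ∑ j, Gh (z k) j * (x₀ j - z k j)
            = (1 - 1/((k:ℝ)+1)) * ∑ j, Gh (z k) j * (x₀ j - w (φ k) j) := by
          rw [Finset.mul_sum]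
          exact Finset.sum_congr rfl fun j _ => by rw [hx_z j]; ring
        rw [h5]
        have hnn : (0:ℝ) ≤ 1 - 1/((k:ℝ)+1) := by linarith [hε1 k]
        nlinarith [mul_le_mul_of_nonneg_left h4 hnn, hε0 k, hε1 k, sq_nonneg (1/((k:ℝ)+1))]
      -- pick a large k and derive the contradiction
      obtain ⟨k, hk⟩ := (hNh.eventually_gt_atTop (max 0 ((C - m + 1)/r))).exists
      set Nk := Real.sqrt (∑ j, (Gh (z k) j)^2) with hNkdef
      have hNk0 : 0 < Nk := lt_of_le_of_lt (le_max_left _ _) hk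
      set u : Fin n → ℝ := fun j => Gh (z k) j / Nk with hudef
      have huj : ∀ j, |u j| ≤ 1 := by
        intro j
        rw [hudef, abs_div, abs_of_pos hNk0, div_le_one hNk0]
        calc |Gh (z k) j| = Real.sqrt ((Gh (z k) j)^2) := (Real.sqrt_sq_eq_abs _).symm
          _ ≤ Nk := Real.sqrt_le_sqrt (Finset.single_le_sum
              (f := fun j => (Gh (z k) j)^2) (fun j _ => sq_nonneg _) (Finset.mem_univ j))
      set v : Fin n → ℝ := x₀ + r • u with hvdef
      have hvball : v ∈ Metric.closedBall x₀ r := by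
        rw [Metric.mem_closedBall, dist_eq_norm]
        have hvx : v - x₀ = r • u := by rw [hvdef]; abel
        rw [hvx, norm_smul]
        have hun : ‖u‖ ≤ 1 := by
          rw [pi_norm_le_iff_of_nonneg zero_le_one]
          intro j
          rw [Real.norm_eq_abs]
          exact huj j
        calc ‖r‖ * ‖u‖ ≤ ‖r‖ * 1 := mul_le_mul_of_nonneg_left hun (norm_nonneg r)
          _ = r := by rw [mul_one, Real.norm_eq_abs, abs_of_pos hrpos]
      have hvU : v ∈ U := hball hvball
      have h1 := hgradh (z k) (hzU k) v hvU
      have hsq : Nk^2 = ∑ j, (Gh (z k) j)^2 :=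
        Real.sq_sqrt (Finset.sum_nonneg fun j _ => sq_nonneg _)
      have h2 : ∑ j, Gh (z k) j * (v j - z k j)
          = (∑ j, Gh (z k) j * (x₀ j - z k j)) + r / Nk * ∑ j, (Gh (z k) j)^2 := by
        rw [Finset.mul_sum, ← Finset.sum_add_distrib]
        refine Finset.sum_congr rfl fun j _ => ?_
        have hvj : v j - z k j = (x₀ j - z k j) + r * u j := by
          simp only [hvdef, Pi.add_apply, Pi.smul_apply, smul_eq_mul]
          ring
        rw [hvj, hudef]
        field_simp
      have h3 : r / Nk * ∑ j, (Gh (z k) j)^2 = r * Nk := by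
        rw [← hsq]
        field_simp
      have hvC : h v ≤ C := le_trans (le_abs_self _)
        (by rw [← Real.norm_eq_abs]; exact hC v hvball)
      have hzm : m ≤ h (z k) := hmle _ (hzU k)
      have hAk := hA k
      have hfin : r * Nk ≤ C - m + 1 := by
        rw [h2, h3] at h1
        linarith
      have hkbig : (C - m + 1)/r < Nk := lt_of_le_of_lt (le_max_right _ _) hk
      rw [div_lt_iff₀ hrpos] at hkbig
      linarith [mul_comm r Nk]
end
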